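/- There exists a constant C > 0 such that for every smooth compactly supported function f : ℝ³ → ℝ, ‖Z₃f‖_{L²} ≤ C · ‖f‖_{L²}^{2/3} · (‖f‖_{L²}² + ‖Z₃³f‖_{L²}²)^{1/6}. -/

import Mathlib

open MeasureTheory

/-- Vertical partial derivative `∂₃`. -/
noncomputable def pd3 (f : (Fin 3 → ℝ) → ℝ) : (Fin 3 → ℝ) → ℝ :=
  fun x => fderiv ℝ f x (Pi.single 2 1)

/-- The conormal vector field `Z₃ f = (x₃/(1+x₃)) ∂₃ f`. -/
noncomputable def Z3 (f : (Fin 3 → ℝ) → ℝ) : (Fin 3 → ℝ) → ℝ :=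
  fun x => (x 2 / (1 + x 2)) * pd3 f x

/-- L² norm over the upper half-space `{x : x₃ > 0}` of ℝ³. -/
noncomputable def L2H (f : (Fin 3 → ℝ) → ℝ) : ℝ :=
  (eLpNorm f 2 (volume.restrict {x : Fin 3 → ℝ | 0 < x 2})).toReal

open Set Filter
open scoped ENNReal NNReal

noncomputable def O1 (g : ℝ → ℝ) : ℝ → ℝ := fun t => (t / (1 + t)) * deriv g t


lemma phi_contDiffOn : ContDiffOn ℝ (⊤:ℕ∞) (fun t : ℝ => t / (1 + t)) (Ioi (-1)) := by
  apply ContDiffOn.div contDiffOn_id (contDiffOn_const.add contDiffOn_id)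
  intro t ht
  have h1 : (-1:ℝ) < t := ht
  simp only [id]
  intro h; linarith

lemma O1_contDiffOn {g : ℝ → ℝ} (hg : ContDiffOn ℝ (⊤:ℕ∞) g (Ioi (-1))) :
    ContDiffOn ℝ (⊤:ℕ∞) (O1 g) (Ioi (-1)) :=
  phi_contDiffOn.mul (hg.deriv_of_isOpen isOpen_Ioi (le_of_eq rfl))

lemma O1_compactSupport {g : ℝ → ℝ} (hg : HasCompactSupport g) :
    HasCompactSupport (O1 g) :=
  hg.deriv.mul_left

lemma cont_integrableOn {h : ℝ → ℝ} (hc : ContinuousOn h (Ioi (-1)))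
    (hs : HasCompactSupport h) : IntegrableOn h (Ioi 0) := by
  have hIci : ContinuousOn h (Ici 0) := hc.mono (fun t ht => lt_of_lt_of_le (by norm_num : (-1:ℝ) < 0) ht)
  set K := tsupport h ∩ Ici (0:ℝ) with hK
  have hKc : IsCompact K := hs.inter_right isClosed_Ici
  have h1 : IntegrableOn h K := (hIci.mono inter_subset_right).integrableOn_compact hKc
  have h2 : IntegrableOn h (Ioi 0 \ K) := by
    have hz : ∀ t ∈ Ioi 0 \ K, h t = 0 := by
      intro t ht
      by_contra hne
      exact ht.2 ⟨subset_tsupport h hne, le_of_lt (show (0:ℝ) < t from ht.1)⟩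
    exact (integrableOn_zero (ε' := ℝ)).congr_fun
      (fun t ht => (hz t ht).symm) (measurableSet_Ioi.diff hKc.measurableSet)
  exact ((h1.union h2).mono_set (fun t ht => by
    by_cases htK : t ∈ K
    · exact Or.inl htK
    · exact Or.inr ⟨ht, htK⟩))

lemma O1_self (g : ℝ → ℝ) (t : ℝ) : O1 g t = (t/(1+t)) * deriv g t := rfl

lemma eventually_zero_atTop {g : ℝ → ℝ} (hs : HasCompactSupport g) :
    ∀ᶠ t in atTop, g t = 0 := by
  obtain ⟨R, hR⟩ := hs.isBounded.subset_closedBall 0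
  filter_upwards [eventually_gt_atTop R] with t ht
  by_contra hne
  have := hR (subset_tsupport g hne)
  simp only [Metric.mem_closedBall, Real.dist_eq, sub_zero] at this
  have : t ≤ R := le_trans (le_abs_self t) this
  linarith

lemma oneD_ibp {g : ℝ → ℝ} (hg : ContDiffOn ℝ (⊤:ℕ∞) g (Ioi (-1))) (hs : HasCompactSupport g) :
    ∫ t in Ioi (0:ℝ),
      (O1 g t ^ 2 + g t * (1 / (1 + t) ^ 2 * O1 g t) + g t * O1 (O1 g) t) = 0 := by
  set w := O1 g with hw
  set F : ℝ → ℝ := fun t => g t * ((t / (1 + t)) * w t) with hF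
  set D : ℝ → ℝ := fun t => w t ^ 2 + g t * (1 / (1 + t) ^ 2 * w t) + g t * O1 w t with hD
  have hwsm : ContDiffOn ℝ (⊤:ℕ∞) w (Ioi (-1)) := O1_contDiffOn hg
  have hderiv : ∀ t ∈ Ioi (-1:ℝ), HasDerivAt F (D t) t := by
    intro t ht
    have hne : (1 + t) ≠ 0 := by have : (-1:ℝ) < t := ht; intro h; linarith
    have hgd : HasDerivAt g (deriv g t) t :=
      ((hg.contDiffAt (isOpen_Ioi.mem_nhds ht)).differentiableAt (by simp)).hasDerivAt
    have hwd : HasDerivAt w (deriv w t) t :=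
      ((hwsm.contDiffAt (isOpen_Ioi.mem_nhds ht)).differentiableAt (by simp)).hasDerivAt
    have hphi : HasDerivAt (fun s : ℝ => s / (1 + s)) (1 / (1 + t) ^ 2) t := by
      have := (hasDerivAt_id t).div ((hasDerivAt_const t (1:ℝ)).add (hasDerivAt_id t)) hne
      convert this using 1
      · rfl
      · rfl
      · rfl
      · simp only [Pi.add_apply, id]
        ring
    have h1 : HasDerivAt (fun s => (s / (1 + s)) * w s)
        (1 / (1 + t) ^ 2 * w t + (t / (1 + t)) * deriv w t) t := hphi.mul hwd
    have h2 : HasDerivAt F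
        (deriv g t * ((t / (1 + t)) * w t) +
          g t * (1 / (1 + t) ^ 2 * w t + (t / (1 + t)) * deriv w t)) t := hgd.mul h1
    convert h2 using 1
    have hwt : w t = (t / (1 + t)) * deriv g t := rfl
    have hOwt : O1 w t = (t / (1 + t)) * deriv w t := rfl
    simp only [hD, hwt, hOwt]
    ring
  have hcont : ContinuousWithinAt F (Ici 0) 0 :=
    ((hderiv 0 (by norm_num)).continuousAt).continuousWithinAt
  have hDint : IntegrableOn D (Ioi 0) := by
    have hc : ContinuousOn D (Ioi (-1)) := by
      have hgc : ContinuousOn g (Ioi (-1)) := hg.continuousOn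
      have hwc : ContinuousOn w (Ioi (-1)) := hwsm.continuousOn
      have hOwc : ContinuousOn (O1 w) (Ioi (-1)) := (O1_contDiffOn hwsm).continuousOn
      have hden : ContinuousOn (fun t : ℝ => 1 / (1 + t) ^ 2) (Ioi (-1)) := by
        apply ContinuousOn.div continuousOn_const
        · fun_prop
        · intro t ht
          have h1 : (-1:ℝ) < t := ht
          have hne : (1:ℝ) + t ≠ 0 := by intro h; linarith
          exact pow_ne_zero 2 hne
      exact ((hwc.pow 2).add (hgc.mul (hden.mul hwc))).add (hgc.mul hOwc)
    have hsupp : HasCompactSupport D := by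
      have h1 : HasCompactSupport w := O1_compactSupport hs
      have h2 : HasCompactSupport (O1 w) := O1_compactSupport h1
      have : HasCompactSupport (fun t => w t ^ 2) := by
        have h3 : HasCompactSupport (w * w) := h1.mul_right
        simpa [pow_two, Pi.mul_def] using h3
      exact (this.add (hs.mul_right)).add (hs.mul_right)
    exact cont_integrableOn hc hsupp
  have htend : Tendsto F atTop (nhds 0) := by
    have hev : ∀ᶠ t in atTop, F t = 0 := by
      filter_upwards [eventually_zero_atTop hs] with t ht
      simp [hF, ht]
    exact tendsto_const_nhds.congr' (by filter_upwards [hev] with t ht; exact ht.symm)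
  have := integral_Ioi_of_hasDerivAt_of_tendsto hcont
    (fun t ht => hderiv t (lt_trans (by norm_num : (-1:ℝ) < 0) ht)) hDint htend
  rw [this]
  simp [hF]

lemma alg6 {x y a c : ℝ} (hx : 0 ≤ x) (hy : 0 ≤ y) (ha : 0 ≤ a) (hc : 0 ≤ c)
    (h1 : x ^ 2 ≤ a * x + a * y) (h2 : y ^ 2 ≤ x * y + x * c) :
    x ^ 6 ≤ 4096 * (a ^ 4 * (a ^ 2 + c ^ 2)) := by
  rcases le_or_gt x (4 * a) with h | h
  · nlinarith [pow_nonneg ha 6, pow_nonneg ha 4, sq_nonneg c, pow_nonneg ha 2,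
      mul_nonneg (pow_nonneg ha 4) (sq_nonneg c), pow_le_pow_left₀ hx h 6]
  · have hx0 : 0 < x := lt_of_le_of_lt (by positivity) h
    have hay : 3 * x ^ 2 ≤ 4 * (a * y) := by nlinarith
    have hy3 : 3 * x ≤ y := by nlinarith
    have h2y : 2 * y ^ 2 ≤ 3 * (x * c) := by nlinarith
    have hx4 : 9 * x ^ 4 ≤ 24 * (a ^ 2 * (x * c)) := by nlinarith [sq_nonneg (a*y)]
    have hx3 : 3 * x ^ 3 ≤ 8 * (a ^ 2 * c) := by nlinarith
    nlinarith [mul_nonneg (mul_nonneg (pow_nonneg ha 2) hc) (pow_nonneg hx0.le 3),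
      mul_nonneg (pow_nonneg ha 4) (sq_nonneg c), pow_nonneg ha 4, pow_nonneg ha 6]

lemma rpow_extract {x a c : ℝ} (hx : 0 ≤ x) (ha : 0 ≤ a) (hc : 0 ≤ c)
    (h : x ^ 6 ≤ 4096 * (a ^ 4 * (a ^ 2 + c ^ 2))) :
    x ≤ 4 * a ^ ((2:ℝ)/3) * (a ^ 2 + c ^ 2) ^ ((1:ℝ)/6) := by
  have hb : (0:ℝ) ≤ a ^ 2 + c ^ 2 := by positivity
  have h1 : x = (x ^ (6:ℕ) : ℝ) ^ ((1:ℝ)/6) := by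
    rw [← Real.rpow_natCast x 6, ← Real.rpow_mul hx]
    norm_num
  rw [h1]
  have h2 : ((x ^ (6:ℕ) : ℝ)) ^ ((1:ℝ)/6) ≤ (4096 * (a ^ 4 * (a ^ 2 + c ^ 2))) ^ ((1:ℝ)/6) :=
    Real.rpow_le_rpow (by positivity) h (by norm_num)
  refine h2.trans_eq ?_
  rw [Real.mul_rpow (by norm_num) (by positivity), Real.mul_rpow (by positivity) hb]
  have h3 : (4096:ℝ) ^ ((1:ℝ)/6) = 4 := by
    rw [show (4096:ℝ) = 4 ^ (6:ℕ) by norm_num, ← Real.rpow_natCast 4 6,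
      ← Real.rpow_mul (by norm_num)]
    norm_num
  have h4 : (a ^ (4:ℕ) : ℝ) ^ ((1:ℝ)/6) = a ^ ((2:ℝ)/3) := by
    rw [← Real.rpow_natCast a 4, ← Real.rpow_mul ha]
    norm_num
  rw [h3, h4]
  ring

abbrev HU : Set (Fin 3 → ℝ) := {x | 0 < x 2}
abbrev UU : Set (Fin 3 → ℝ) := {x | -1 < x 2}

def ins (t : ℝ) (y : Fin 2 → ℝ) : Fin 3 → ℝ := Fin.insertNth 2 t y

lemma ins_apply_same (t : ℝ) (y : Fin 2 → ℝ) : ins t y 2 = t := by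
  simp [ins]

lemma isOpen_UU : IsOpen UU := isOpen_lt continuous_const (continuous_apply 2)
lemma measurableSet_HU : MeasurableSet HU :=
  measurableSet_lt measurable_const (measurable_pi_apply 2)

lemma pd3_contDiffOn {h : (Fin 3 → ℝ) → ℝ} (hsm : ContDiffOn ℝ (⊤:ℕ∞) h UU) :
    ContDiffOn ℝ (⊤:ℕ∞) (pd3 h) UU := by
  have h1 : ContDiffOn ℝ (⊤:ℕ∞) (fderiv ℝ h) UU :=
    hsm.fderiv_of_isOpen isOpen_UU (le_of_eq rfl)
  exact (ContinuousLinearMap.apply ℝ ℝ (Pi.single 2 1 : Fin 3 → ℝ)).contDiff.comp_contDiffOn h1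

lemma Z3_contDiffOn {h : (Fin 3 → ℝ) → ℝ} (hsm : ContDiffOn ℝ (⊤:ℕ∞) h UU) :
    ContDiffOn ℝ (⊤:ℕ∞) (Z3 h) UU := by
  apply ContDiffOn.mul ?_ (pd3_contDiffOn hsm)
  apply ContDiffOn.div ((ContinuousLinearMap.proj 2 : (Fin 3 → ℝ) →L[ℝ] ℝ)).contDiff.contDiffOn
    (contDiffOn_const.add ((ContinuousLinearMap.proj 2 : (Fin 3 → ℝ) →L[ℝ] ℝ)).contDiff.contDiffOn)
  intro x hx
  have h1 : (-1:ℝ) < x 2 := hx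
  simp only [ContinuousLinearMap.proj_apply]
  intro hzero; linarith

lemma pd3_compactSupport {h : (Fin 3 → ℝ) → ℝ} (hs : HasCompactSupport h) :
    HasCompactSupport (pd3 h) := by
  have h1 : HasCompactSupport (fderiv ℝ h) := hs.fderiv (𝕜 := ℝ)
  exact h1.comp_left (g := fun L : (Fin 3 → ℝ) →L[ℝ] ℝ => L (Pi.single 2 1)) rfl

lemma Z3_compactSupport {h : (Fin 3 → ℝ) → ℝ} (hs : HasCompactSupport h) :
    HasCompactSupport (Z3 h) := (pd3_compactSupport hs).mul_left

lemma cont_integrableOn_HU {h : (Fin 3 → ℝ) → ℝ} (hc : ContinuousOn h UU)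
    (hs : HasCompactSupport h) : IntegrableOn h HU := by
  have hclosed : IsClosed {x : Fin 3 → ℝ | 0 ≤ x 2} :=
    isClosed_le continuous_const (continuous_apply 2)
  have hsub : {x : Fin 3 → ℝ | 0 ≤ x 2} ⊆ UU := fun x hx =>
    lt_of_lt_of_le (show (-1:ℝ) < 0 by norm_num) hx
  have hIci : ContinuousOn h {x : Fin 3 → ℝ | 0 ≤ x 2} := hc.mono hsub
  set K := tsupport h ∩ {x : Fin 3 → ℝ | 0 ≤ x 2} with hK
  have hKc : IsCompact K := hs.inter_right hclosed
  have h1 : IntegrableOn h K := (hIci.mono inter_subset_right).integrableOn_compact hKc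
  have h2 : IntegrableOn h (HU \ K) := by
    have hz : ∀ x ∈ HU \ K, h x = 0 := by
      intro x hx
      by_contra hne
      exact hx.2 ⟨subset_tsupport h hne, le_of_lt (show (0:ℝ) < x 2 from hx.1)⟩
    exact (integrableOn_zero (ε' := ℝ)).congr_fun
      (fun x hx => (hz x hx).symm) (measurableSet_HU.diff hKc.measurableSet)
  exact ((h1.union h2).mono_set (fun x hx => by
    by_cases hxK : x ∈ K
    · exact Or.inl hxK
    · exact Or.inr ⟨hx, hxK⟩))

lemma ins_affine (t : ℝ) (y : Fin 2 → ℝ) :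
    ins t y = ins 0 y + t • (Pi.single 2 1 : Fin 3 → ℝ) := by
  funext j
  unfold ins
  refine Fin.succAboveCases 2 ?_ ?_ j
  · simp
  · intro i; simp [Fin.insertNth_apply_succAbove, Pi.single_apply]

lemma ins_hasDerivAt (t : ℝ) (y : Fin 2 → ℝ) :
    HasDerivAt (fun s : ℝ => ins s y) (Pi.single 2 1 : Fin 3 → ℝ) t := by
  have h1 : HasDerivAt (fun s : ℝ => ins 0 y + s • (Pi.single 2 1 : Fin 3 → ℝ))
      (Pi.single 2 1 : Fin 3 → ℝ) t := by
    simpa using ((hasDerivAt_id t).smul_const (Pi.single 2 1 : Fin 3 → ℝ)).const_add (ins 0 y)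
  exact h1.congr_of_eventuallyEq (Eventually.of_forall fun s => (ins_affine s y))

lemma ins_mem_UU {t : ℝ} (ht : t ∈ Ioi (-1:ℝ)) (y : Fin 2 → ℝ) : ins t y ∈ UU := by
  show (-1:ℝ) < ins t y 2
  rw [ins_apply_same]; exact ht

lemma slice_hasDerivAt {h : (Fin 3 → ℝ) → ℝ} {t : ℝ} (y : Fin 2 → ℝ)
    (hd : DifferentiableAt ℝ h (ins t y)) :
    HasDerivAt (fun s => h (ins s y)) (pd3 h (ins t y)) t :=
  hd.hasFDerivAt.comp_hasDerivAt t (ins_hasDerivAt t y)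

lemma slice_contDiffOn {h : (Fin 3 → ℝ) → ℝ} (hsm : ContDiffOn ℝ (⊤:ℕ∞) h UU) (y : Fin 2 → ℝ) :
    ContDiffOn ℝ (⊤:ℕ∞) (fun t => h (ins t y)) (Ioi (-1)) := by
  have hι : ContDiff ℝ (⊤:ℕ∞) (fun s : ℝ => ins s y) := by
    have h1 : ContDiff ℝ (⊤:ℕ∞) (fun s : ℝ => ins 0 y + s • (Pi.single 2 1 : Fin 3 → ℝ)) :=
      contDiff_const.add (contDiff_id.smul contDiff_const)
    rw [show (fun s : ℝ => ins s y) = fun s : ℝ => ins 0 y + s • (Pi.single 2 1 : Fin 3 → ℝ)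
      from funext fun s => ins_affine s y]
    exact h1
  exact hsm.comp hι.contDiffOn (fun t ht => ins_mem_UU ht y)

lemma slice_compactSupport {h : (Fin 3 → ℝ) → ℝ} (hs : HasCompactSupport h) (y : Fin 2 → ℝ) :
    HasCompactSupport (fun t => h (ins t y)) := by
  obtain ⟨R, hR⟩ := hs.isBounded.subset_closedBall 0
  apply HasCompactSupport.intro (isCompact_Icc (a := -R) (b := R))
  intro t ht
  by_contra hne
  have hmem : ins t y ∈ tsupport h := subset_tsupport _ hne
  have h1 := hR hmem
  rw [Metric.mem_closedBall, dist_zero_right] at h1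
  have h2 : |t| ≤ ‖ins t y‖ := by
    have h3 := norm_le_pi_norm (ins t y) 2
    rwa [ins_apply_same, Real.norm_eq_abs] at h3
  have h4 : |t| ≤ R := le_trans h2 h1
  rcases abs_le.mp h4 with ⟨h5, h6⟩
  exact ht ⟨h5, h6⟩

lemma slice_Z3 {h : (Fin 3 → ℝ) → ℝ} (hsm : ContDiffOn ℝ (⊤:ℕ∞) h UU) (y : Fin 2 → ℝ)
    {t : ℝ} (ht : t ∈ Ioi (-1:ℝ)) :
    Z3 h (ins t y) = O1 (fun s => h (ins s y)) t := by
  have hd : DifferentiableAt ℝ h (ins t y) :=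
    (hsm.contDiffAt (isOpen_UU.mem_nhds (ins_mem_UU ht y))).differentiableAt (by simp)
  have hder := (slice_hasDerivAt y hd).deriv
  show ins t y 2 / (1 + ins t y 2) * pd3 h (ins t y)
    = (t / (1 + t)) * deriv (fun s => h (ins s y)) t
  rw [ins_apply_same, hder]

lemma fubini_HU (F : (Fin 3 → ℝ) → ℝ) (hF : IntegrableOn F HU) :
    ∫ x in HU, F x = ∫ y : Fin 2 → ℝ, ∫ t in Ioi (0:ℝ), F (ins t y) := by
  set e := MeasurableEquiv.piFinSuccAbove (fun _ : Fin 3 => ℝ) 2 with he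
  have mp : MeasurePreserving e volume volume := volume_preserving_piFinSuccAbove _ 2
  have mps : MeasurePreserving e.symm volume volume := mp.symm e
  have hsymm : ∀ z : ℝ × (Fin 2 → ℝ), e.symm z = ins z.1 z.2 := by
    intro z
    simp [he, ins, MeasurableEquiv.piFinSuccAbove_symm_apply, Fin.insertNthEquiv]
  have hpre : e.symm ⁻¹' HU = Ioi (0:ℝ) ×ˢ univ := by
    ext z
    simp only [mem_preimage, mem_prod, mem_univ, and_true, mem_Ioi]
    rw [hsymm z]
    show (0 < ins z.1 z.2 2) ↔ _
    simp [ins]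
  have h1 : ∫ x in HU, F x = ∫ z in Ioi (0:ℝ) ×ˢ univ, F (e.symm z) := by
    rw [← mps.setIntegral_preimage_emb e.symm.measurableEmbedding F HU, hpre]
  have hInt : Integrable (fun z : ℝ × (Fin 2 → ℝ) => F (e.symm z))
      ((volume.restrict (Ioi 0)).prod volume) := by
    have h2 : IntegrableOn (F ∘ e.symm) (e.symm ⁻¹' HU) volume :=
      (mps.integrableOn_comp_preimage e.symm.measurableEmbedding).mpr hF
    rw [hpre] at h2
    have h3 : (volume : Measure (ℝ × (Fin 2 → ℝ))).restrict (Ioi (0:ℝ) ×ˢ univ)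
        = (volume.restrict (Ioi 0)).prod volume := by
      rw [Measure.volume_eq_prod, ← Measure.prod_restrict, Measure.restrict_univ]
    rw [IntegrableOn, h3] at h2
    exact h2
  rw [h1]
  have h4 : ∫ z in Ioi (0:ℝ) ×ˢ univ, F (e.symm z)
      = ∫ z, F (e.symm z) ∂((volume.restrict (Ioi 0)).prod volume) := by
    rw [Measure.volume_eq_prod, ← Measure.prod_restrict, Measure.restrict_univ]
  rw [h4, integral_prod_symm _ hInt]
  simp only [hsymm]

noncomputable def D3 (h : (Fin 3 → ℝ) → ℝ) : (Fin 3 → ℝ) → ℝ :=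
  fun x => Z3 h x ^ 2 + h x * (1 / (1 + x 2) ^ 2 * Z3 h x) + h x * Z3 (Z3 h) x

lemma O1_congr_Ioi {g₁ g₂ : ℝ → ℝ} (h : ∀ s ∈ Ioi (-1:ℝ), g₁ s = g₂ s) {t : ℝ}
    (ht : t ∈ Ioi (-1:ℝ)) : O1 g₁ t = O1 g₂ t := by
  unfold O1
  congr 1
  apply Filter.EventuallyEq.deriv_eq
  filter_upwards [isOpen_Ioi.mem_nhds ht] with s hs
  exact h s hs

lemma D3_slice {h : (Fin 3 → ℝ) → ℝ} (hsm : ContDiffOn ℝ (⊤:ℕ∞) h UU) (y : Fin 2 → ℝ)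
    {t : ℝ} (ht : t ∈ Ioi (0:ℝ)) :
    D3 h (ins t y) =
      O1 (fun s => h (ins s y)) t ^ 2
        + h (ins t y) * (1 / (1 + t) ^ 2 * O1 (fun s => h (ins s y)) t)
        + h (ins t y) * O1 (O1 (fun s => h (ins s y))) t := by
  have ht' : t ∈ Ioi (-1:ℝ) := lt_trans (by norm_num : (-1:ℝ) < 0) ht
  have h1 : Z3 h (ins t y) = O1 (fun s => h (ins s y)) t := slice_Z3 hsm y ht'
  have h2 : Z3 (Z3 h) (ins t y) = O1 (O1 (fun s => h (ins s y))) t := by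
    rw [slice_Z3 (Z3_contDiffOn hsm) y ht']
    exact O1_congr_Ioi (fun s hs => slice_Z3 hsm y hs) ht'
  unfold D3
  rw [h1, h2, ins_apply_same]

lemma kappa_contOn : ContinuousOn (fun x : Fin 3 → ℝ => 1 / (1 + x 2) ^ 2) UU := by
  apply ContinuousOn.div continuousOn_const
  · fun_prop
  · intro x hx
    have h1 : (-1:ℝ) < x 2 := hx
    have hne : (1:ℝ) + x 2 ≠ 0 := by intro hc; linarith
    exact pow_ne_zero 2 hne

lemma integrable_term1 {h : (Fin 3 → ℝ) → ℝ} (hsm : ContDiffOn ℝ (⊤:ℕ∞) h UU)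
    (hs : HasCompactSupport h) : IntegrableOn (fun x => Z3 h x ^ 2) HU := by
  apply cont_integrableOn_HU ((Z3_contDiffOn hsm).continuousOn.pow 2)
  have h1 : HasCompactSupport (Z3 h * Z3 h) := (Z3_compactSupport hs).mul_right
  simpa [pow_two, Pi.mul_def] using h1

lemma integrable_term2 {h : (Fin 3 → ℝ) → ℝ} (hsm : ContDiffOn ℝ (⊤:ℕ∞) h UU)
    (hs : HasCompactSupport h) :
    IntegrableOn (fun x => h x * (1 / (1 + x 2) ^ 2 * Z3 h x)) HU := by
  apply cont_integrableOn_HU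
    (hsm.continuousOn.mul (kappa_contOn.mul (Z3_contDiffOn hsm).continuousOn))
  exact hs.mul_right

lemma integrable_term3 {h : (Fin 3 → ℝ) → ℝ} (hsm : ContDiffOn ℝ (⊤:ℕ∞) h UU)
    (hs : HasCompactSupport h) :
    IntegrableOn (fun x => h x * Z3 (Z3 h) x) HU := by
  apply cont_integrableOn_HU
    (hsm.continuousOn.mul (Z3_contDiffOn (Z3_contDiffOn hsm)).continuousOn)
  exact hs.mul_right

lemma integrable_abs_mul {u v : (Fin 3 → ℝ) → ℝ}
    (hu : ContinuousOn u UU) (hv : ContinuousOn v UU) (hsu : HasCompactSupport u) :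
    IntegrableOn (fun x => |u x| * |v x|) HU := by
  apply cont_integrableOn_HU (hu.abs.mul hv.abs)
  apply HasCompactSupport.intro hsu
  intro x hx
  have : u x = 0 := image_eq_zero_of_notMem_tsupport hx
  simp [this]

lemma integral_D3 {h : (Fin 3 → ℝ) → ℝ} (hsm : ContDiffOn ℝ (⊤:ℕ∞) h UU)
    (hs : HasCompactSupport h) : ∫ x in HU, D3 h x = 0 := by
  have hint : IntegrableOn (D3 h) HU := by
    exact ((integrable_term1 hsm hs).add (integrable_term2 hsm hs)).add
      (integrable_term3 hsm hs)
  rw [fubini_HU _ hint]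
  have hinner : ∀ y : Fin 2 → ℝ, ∫ t in Ioi (0:ℝ), D3 h (ins t y) = 0 := by
    intro y
    have heq : ∫ t in Ioi (0:ℝ), D3 h (ins t y)
        = ∫ t in Ioi (0:ℝ), (O1 (fun s => h (ins s y)) t ^ 2
            + (fun s => h (ins s y)) t * (1 / (1 + t) ^ 2 * O1 (fun s => h (ins s y)) t)
            + (fun s => h (ins s y)) t * O1 (O1 (fun s => h (ins s y))) t) := by
      apply setIntegral_congr_fun measurableSet_Ioi
      intro t ht
      exact D3_slice hsm y ht
    rw [heq]
    exact oneD_ibp (slice_contDiffOn hsm y) (slice_compactSupport hs y)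
  simp only [hinner, integral_zero]

lemma ibp3d {h : (Fin 3 → ℝ) → ℝ} (hsm : ContDiffOn ℝ (⊤:ℕ∞) h UU)
    (hs : HasCompactSupport h) :
    ∫ x in HU, Z3 h x ^ 2 ≤ (∫ x in HU, |h x| * |Z3 h x|)
      + ∫ x in HU, |h x| * |Z3 (Z3 h) x| := by
  have h1 := integrable_term1 hsm hs
  have h2 := integrable_term2 hsm hs
  have h3 := integrable_term3 hsm hs
  have hD : ∫ x in HU, Z3 h x ^ 2
      = -(∫ x in HU, h x * (1 / (1 + x 2) ^ 2 * Z3 h x)) - ∫ x in HU, h x * Z3 (Z3 h) x := by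
    have hsplit : ∫ x in HU, D3 h x = (∫ x in HU, Z3 h x ^ 2)
        + (∫ x in HU, h x * (1 / (1 + x 2) ^ 2 * Z3 h x)) + ∫ x in HU, h x * Z3 (Z3 h) x := by
      have ha : IntegrableOn
          (fun x => Z3 h x ^ 2 + h x * (1 / (1 + x 2) ^ 2 * Z3 h x)) HU := h1.add h2
      unfold D3
      rw [integral_add ha h3, integral_add h1 h2]
    have h0 := integral_D3 hsm hs
    rw [hsplit] at h0
    linarith
  rw [hD]
  have hA : IntegrableOn (fun x => |h x| * |Z3 h x|) HU :=
    integrable_abs_mul hsm.continuousOn (Z3_contDiffOn hsm).continuousOn hs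
  have hB : IntegrableOn (fun x => |h x| * |Z3 (Z3 h) x|) HU :=
    integrable_abs_mul hsm.continuousOn (Z3_contDiffOn (Z3_contDiffOn hsm)).continuousOn hs
  have e2 : -(∫ x in HU, h x * (1 / (1 + x 2) ^ 2 * Z3 h x)) ≤ ∫ x in HU, |h x| * |Z3 h x| := by
    rw [← integral_neg]
    apply setIntegral_mono_on h2.neg hA measurableSet_HU
    intro x hx
    have hx2 : (0:ℝ) < x 2 := hx
    have hk1 : 1 / (1 + x 2) ^ 2 ≤ 1 := by
      rw [div_le_one (by positivity)]
      nlinarith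
    have hk0 : 0 ≤ 1 / (1 + x 2) ^ 2 := by positivity
    calc -(h x * (1 / (1 + x 2) ^ 2 * Z3 h x)) ≤ |h x * (1 / (1 + x 2) ^ 2 * Z3 h x)| :=
          neg_le_abs _
      _ = |h x| * (1 / (1 + x 2) ^ 2 * |Z3 h x|) := by
          rw [abs_mul, abs_mul, abs_of_nonneg hk0]
      _ ≤ |h x| * (1 * |Z3 h x|) := by
          apply mul_le_mul_of_nonneg_left _ (abs_nonneg _)
          exact mul_le_mul_of_nonneg_right hk1 (abs_nonneg _)
      _ = |h x| * |Z3 h x| := by ring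
  have e3 : -(∫ x in HU, h x * Z3 (Z3 h) x) ≤ ∫ x in HU, |h x| * |Z3 (Z3 h) x| := by
    rw [← integral_neg]
    apply setIntegral_mono_on h3.neg hB measurableSet_HU
    intro x _
    calc -(h x * Z3 (Z3 h) x) ≤ |h x * Z3 (Z3 h) x| := neg_le_abs _
      _ = |h x| * |Z3 (Z3 h) x| := abs_mul _ _
  linarith

lemma HU_subset_UU : HU ⊆ UU := fun x hx =>
  lt_trans (show (-1:ℝ) < 0 by norm_num) hx

lemma memLp2 {h : (Fin 3 → ℝ) → ℝ} (hc : ContinuousOn h UU) (hs : HasCompactSupport h) :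
    MemLp h 2 (volume.restrict HU) := by
  have hmeas : AEStronglyMeasurable h (volume.restrict HU) :=
    (hc.mono HU_subset_UU).aestronglyMeasurable measurableSet_HU
  refine (memLp_two_iff_integrable_sq hmeas).mpr ?_
  apply cont_integrableOn_HU (hc.pow 2)
  have h1 : HasCompactSupport (h * h) := hs.mul_right
  simpa [pow_two, Pi.mul_def] using h1

lemma L2H_eq {h : (Fin 3 → ℝ) → ℝ} (hm : MemLp h 2 (volume.restrict HU)) :
    L2H h = (∫ x in HU, |h x| ^ (2:ℝ)) ^ ((1:ℝ)/2) := by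
  unfold L2H
  rw [hm.eLpNorm_eq_integral_rpow_norm (by norm_num) (by norm_num)]
  rw [ENNReal.toReal_ofReal (by
    apply Real.rpow_nonneg
    exact integral_nonneg (fun x => by positivity))]
  norm_num [Real.norm_eq_abs]

lemma L2H_nonneg (h : (Fin 3 → ℝ) → ℝ) : 0 ≤ L2H h := ENNReal.toReal_nonneg

lemma L2H_sq {h : (Fin 3 → ℝ) → ℝ} (hm : MemLp h 2 (volume.restrict HU)) :
    L2H h ^ 2 = ∫ x in HU, h x ^ 2 := by
  rw [L2H_eq hm]
  have hnn : 0 ≤ ∫ x in HU, |h x| ^ (2:ℝ) := integral_nonneg (fun x => by positivity)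
  rw [← Real.rpow_natCast ((∫ x in HU, |h x| ^ (2:ℝ)) ^ ((1:ℝ)/2)) 2, ← Real.rpow_mul hnn]
  norm_num

lemma holder_HU {u v : (Fin 3 → ℝ) → ℝ} (hu : MemLp u 2 (volume.restrict HU))
    (hv : MemLp v 2 (volume.restrict HU)) :
    ∫ x in HU, |u x| * |v x| ≤ L2H u * L2H v := by
  have hpq : Real.HolderConjugate 2 2 := ⟨by norm_num, by norm_num, by norm_num⟩
  have h2 : ENNReal.ofReal (2:ℝ) = 2 := by
    rw [show ((2:ℝ≥0∞)) = ENNReal.ofReal ((2:ℕ):ℝ) by simp]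
    norm_num
  have hu' : MemLp (fun x => |u x|) (ENNReal.ofReal 2) (volume.restrict HU) := by
    rw [h2]; simpa [Real.norm_eq_abs] using hu.norm
  have hv' : MemLp (fun x => |v x|) (ENNReal.ofReal 2) (volume.restrict HU) := by
    rw [h2]; simpa [Real.norm_eq_abs] using hv.norm
  have hh := integral_mul_le_Lp_mul_Lq_of_nonneg hpq
    (Filter.Eventually.of_forall fun x => abs_nonneg (u x))
    (Filter.Eventually.of_forall fun x => abs_nonneg (v x)) hu' hv'
  rw [L2H_eq hu, L2H_eq hv]
  convert hh using 3 <;> norm_num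

/-- Interpolation inequality: `‖Z₃ f‖ ≲ ‖f‖^{2/3} (‖f‖² + ‖Z₃³ f‖²)^{1/6}`. -/
theorem stmt3 :
    ∃ C > (0 : ℝ), ∀ f : (Fin 3 → ℝ) → ℝ,
      ContDiff ℝ (⊤ : ℕ∞) f → HasCompactSupport f →
      L2H (Z3 f) ≤ C * L2H f ^ ((2 : ℝ)/3) *
        (L2H f ^ 2 + L2H (Z3^[3] f) ^ 2) ^ ((1 : ℝ)/6) := by
  refine ⟨4, by norm_num, ?_⟩
  intro f hf hsupp
  have hsm : ContDiffOn ℝ (⊤:ℕ∞) f UU := hf.contDiffOn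
  have hsm1 : ContDiffOn ℝ (⊤:ℕ∞) (Z3 f) UU := Z3_contDiffOn hsm
  have hsm2 : ContDiffOn ℝ (⊤:ℕ∞) (Z3 (Z3 f)) UU := Z3_contDiffOn hsm1
  have hsm3 : ContDiffOn ℝ (⊤:ℕ∞) (Z3 (Z3 (Z3 f))) UU := Z3_contDiffOn hsm2
  have hs1 : HasCompactSupport (Z3 f) := Z3_compactSupport hsupp
  have hs2 : HasCompactSupport (Z3 (Z3 f)) := Z3_compactSupport hs1
  have hs3 : HasCompactSupport (Z3 (Z3 (Z3 f))) := Z3_compactSupport hs2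
  have hm0 : MemLp f 2 (volume.restrict HU) := memLp2 hsm.continuousOn hsupp
  have hm1 : MemLp (Z3 f) 2 (volume.restrict HU) := memLp2 hsm1.continuousOn hs1
  have hm2 : MemLp (Z3 (Z3 f)) 2 (volume.restrict HU) := memLp2 hsm2.continuousOn hs2
  have hm3 : MemLp (Z3 (Z3 (Z3 f))) 2 (volume.restrict HU) := memLp2 hsm3.continuousOn hs3
  have hiter : Z3^[3] f = Z3 (Z3 (Z3 f)) := by
    simp [Function.iterate_succ_apply', Function.iterate_succ_apply]
  have hA0 : 0 ≤ L2H f := L2H_nonneg f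
  have hX0 : 0 ≤ L2H (Z3 f) := L2H_nonneg _
  have hY0 : 0 ≤ L2H (Z3 (Z3 f)) := L2H_nonneg _
  have hC0 : 0 ≤ L2H (Z3 (Z3 (Z3 f))) := L2H_nonneg _
  have i1 : L2H (Z3 f) ^ 2 ≤ L2H f * L2H (Z3 f) + L2H f * L2H (Z3 (Z3 f)) := by
    rw [L2H_sq hm1]
    calc ∫ x in HU, Z3 f x ^ 2
        ≤ (∫ x in HU, |f x| * |Z3 f x|) + ∫ x in HU, |f x| * |Z3 (Z3 f) x| :=
          ibp3d hsm hsupp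
      _ ≤ L2H f * L2H (Z3 f) + L2H f * L2H (Z3 (Z3 f)) :=
          add_le_add (holder_HU hm0 hm1) (holder_HU hm0 hm2)
  have i2 : L2H (Z3 (Z3 f)) ^ 2
      ≤ L2H (Z3 f) * L2H (Z3 (Z3 f)) + L2H (Z3 f) * L2H (Z3 (Z3 (Z3 f))) := by
    rw [L2H_sq hm2]
    calc ∫ x in HU, Z3 (Z3 f) x ^ 2
        ≤ (∫ x in HU, |Z3 f x| * |Z3 (Z3 f) x|)
            + ∫ x in HU, |Z3 f x| * |Z3 (Z3 (Z3 f)) x| := ibp3d hsm1 hs1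
      _ ≤ L2H (Z3 f) * L2H (Z3 (Z3 f)) + L2H (Z3 f) * L2H (Z3 (Z3 (Z3 f))) :=
          add_le_add (holder_HU hm1 hm2) (holder_HU hm1 hm3)
  have key := rpow_extract hX0 hA0 hC0 (alg6 hX0 hY0 hA0 hC0 i1 i2)
  rw [hiter]
  exact key
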